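/- arXiv:2404.07955 — 4 statements merged into one kernel-verified Lean document; each statement's English description precedes it below -/
import Mathlib

section
/- If a matrix E ∈ ℝ^{n₁×n₂} is α-sparse (at most α·n₁ nonzero entries in each column and at most α·n₂ nonzero entries in each row), then its operator norm satisfies ‖E‖₂ ≤ α·√(n₁·n₂)·‖E‖_∞, where ‖E‖_∞ denotes the maximum absolute value of the entries of E. -/
open Matrix Real

/-- Entrywise supremum norm `‖E‖_∞ = max_{i,j} |E i j|`. -/
noncomputable def entrySup {m n : ℕ} (E : Matrix (Fin m) (Fin n) ℝ) : ℝ :=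
  ⨆ i, ⨆ j, |E i j|

/-- A matrix is `α`-sparse: at most `α·m` nonzero entries per column
and at most `α·n` nonzero entries per row. -/
def IsAlphaSparse {m n : ℕ} (α : ℝ) (E : Matrix (Fin m) (Fin n) ℝ) : Prop :=
  (∀ j, ((Finset.univ.filter fun i => E i j ≠ 0).card : ℝ) ≤ α * m) ∧
  (∀ i, ((Finset.univ.filter fun j => E i j ≠ 0).card : ℝ) ≤ α * n)

/-- Spectral (operator) norm of a matrix, via the Euclidean spaces. -/
noncomputable def matSpectralNorm {m n : ℕ} (A : Matrix (Fin m) (Fin n) ℝ) : ℝ :=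
  ‖LinearMap.toContinuousLinearMap (Matrix.toEuclideanLin A)‖

/-- Frobenius norm. -/
noncomputable def frobNorm {m n : ℕ} (A : Matrix (Fin m) (Fin n) ℝ) : ℝ :=
  Real.sqrt (∑ i, ∑ j, (A i j) ^ 2)

/-- Euclidean norm of the `i`-th row of a matrix. -/
noncomputable def rowNorm {m n : ℕ} (A : Matrix (Fin m) (Fin n) ℝ) (i : Fin m) : ℝ :=
  Real.sqrt (∑ j, (A i j) ^ 2)

/-- `μ`-incoherence: every row has Euclidean norm at most `μ√r/√m`. -/
def IsIncoherent {m r : ℕ} (μ : ℝ) (U : Matrix (Fin m) (Fin r) ℝ) : Prop :=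
  ∀ i, rowNorm U i ≤ μ * Real.sqrt r / Real.sqrt m

/-!
Schur test: by Cauchy–Schwarz with weights `|aᵢⱼ|`, `(∑ⱼ aᵢⱼ xⱼ)² ≤ (∑ⱼ |aᵢⱼ|) ∑ⱼ |aᵢⱼ| xⱼ²`;
bounding the row sum by `R`, summing over `i` and bounding the column sums by `C` gives
`‖A x‖² ≤ R C ‖x‖²`. An `α`-sparse matrix has row sums `≤ α n₂ ‖E‖_∞` and column sums
`≤ α n₁ ‖E‖_∞`, and `√(α n₂ ‖E‖_∞ · α n₁ ‖E‖_∞) = α √(n₁ n₂) ‖E‖_∞`.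
-/

open Finset

namespace Matrix

variable {m n : Type*} [Fintype m] [Fintype n]

theorem sq_sum_mul_le_sum_abs_mul_sum_abs_mul_sq (a x : n → ℝ) :
    (∑ j, a j * x j) ^ 2 ≤ (∑ j, |a j|) * ∑ j, |a j| * x j ^ 2 :=
  sum_sq_le_sum_mul_sum_of_sq_le_mul _ (fun _ _ => abs_nonneg _) (fun _ _ => by positivity)
    fun j _ => le_of_eq <| by rw [mul_pow, ← sq_abs (a j)]; ring

theorem sum_sq_mulVec_le_of_sum_abs_le {A : Matrix m n ℝ} {R C : ℝ} (hR : 0 ≤ R)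
    (hrow : ∀ i, ∑ j, |A i j| ≤ R) (hcol : ∀ j, ∑ i, |A i j| ≤ C) (x : n → ℝ) :
    ∑ i, (A *ᵥ x) i ^ 2 ≤ R * C * ∑ j, x j ^ 2 :=
  calc ∑ i, (A *ᵥ x) i ^ 2 ≤ ∑ i, R * ∑ j, |A i j| * x j ^ 2 := by
        gcongr with i
        exact (sq_sum_mul_le_sum_abs_mul_sum_abs_mul_sq (A i) x).trans
          (by gcongr; exact hrow i)
    _ = R * ∑ j, (∑ i, |A i j|) * x j ^ 2 := by
        rw [← mul_sum, sum_comm]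
        simp_rw [sum_mul]
    _ ≤ R * ∑ j, C * x j ^ 2 := by gcongr with j; exact hcol j
    _ = R * C * ∑ j, x j ^ 2 := by rw [← mul_sum, mul_assoc]

theorem norm_toEuclideanLin_le_sqrt_of_sum_abs_le [DecidableEq n] {A : Matrix m n ℝ} {R C : ℝ}
    (hR : 0 ≤ R) (hC : 0 ≤ C) (hrow : ∀ i, ∑ j, |A i j| ≤ R) (hcol : ∀ j, ∑ i, |A i j| ≤ C) :
    ‖LinearMap.toContinuousLinearMap (toEuclideanLin A)‖ ≤ √(R * C) := by
  refine ContinuousLinearMap.opNorm_le_bound _ (sqrt_nonneg _) fun x => ?_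
  rw [← sq_le_sq₀ (norm_nonneg _) (by positivity), mul_pow, sq_sqrt (mul_nonneg hR hC),
    EuclideanSpace.norm_sq_eq, EuclideanSpace.norm_sq_eq]
  simpa [Real.norm_eq_abs, sq_abs, toLpLin_apply] using sum_sq_mulVec_le_of_sum_abs_le hR hrow hcol x

end Matrix

theorem sum_abs_le_card_ne_zero_mul {ι : Type*} [Fintype ι] {a : ι → ℝ} {M : ℝ}
    (h : ∀ i, |a i| ≤ M) : ∑ i, |a i| ≤ #{i | a i ≠ 0} * M := by
  rw [← sum_filter_of_ne fun i _ hi => abs_ne_zero.mp hi, ← nsmul_eq_mul]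
  exact sum_le_card_nsmul _ _ M fun i _ => h i

section EntrySup

variable {n₁ n₂ : ℕ} (E : Matrix (Fin n₁) (Fin n₂) ℝ)

theorem abs_le_entrySup (i : Fin n₁) (j : Fin n₂) : |E i j| ≤ entrySup E :=
  (le_ciSup (f := fun j => |E i j|) (Set.finite_range _).bddAbove j).trans
    (le_ciSup (f := fun i => ⨆ j, |E i j|) (Set.finite_range _).bddAbove i)

theorem entrySup_nonneg : 0 ≤ entrySup E :=
  Real.iSup_nonneg fun _ => Real.iSup_nonneg fun _ => abs_nonneg _

end EntrySup

namespace IsAlphaSparse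

variable {n₁ n₂ : ℕ} {α : ℝ} {E : Matrix (Fin n₁) (Fin n₂) ℝ}

theorem sum_abs_row_le (hE : IsAlphaSparse α E) (i : Fin n₁) :
    ∑ j, |E i j| ≤ α * n₂ * entrySup E :=
  (sum_abs_le_card_ne_zero_mul (abs_le_entrySup E i)).trans
    (mul_le_mul_of_nonneg_right (hE.2 i) (entrySup_nonneg E))

theorem sum_abs_col_le (hE : IsAlphaSparse α E) (j : Fin n₂) :
    ∑ i, |E i j| ≤ α * n₁ * entrySup E :=
  (sum_abs_le_card_ne_zero_mul fun i => abs_le_entrySup E i j).trans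
    (mul_le_mul_of_nonneg_right (hE.1 j) (entrySup_nonneg E))

theorem nonneg (hE : IsAlphaSparse α E) (h₁ : 0 < n₁) (h₂ : 0 < n₂) : 0 ≤ α :=
  nonneg_of_mul_nonneg_left ((Nat.cast_nonneg _).trans (hE.1 ⟨0, h₂⟩)) (by exact_mod_cast h₁)

end IsAlphaSparse

theorem sparse_matrix_opNorm_bound {n₁ n₂ : ℕ} (α : ℝ)
    (E : Matrix (Fin n₁) (Fin n₂) ℝ) (hE : IsAlphaSparse α E) :
    matSpectralNorm E ≤ α * Real.sqrt (n₁ * n₂) * entrySup E := by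
  rcases Nat.eq_zero_or_pos n₁ with rfl | h₁
  · simp [matSpectralNorm, Subsingleton.elim E 0]
  rcases Nat.eq_zero_or_pos n₂ with rfl | h₂
  · simp [matSpectralNorm, Subsingleton.elim E 0]
  have hα := hE.nonneg h₁ h₂
  have hM := entrySup_nonneg E
  calc matSpectralNorm E ≤ √(α * n₂ * entrySup E * (α * n₁ * entrySup E)) :=
        norm_toEuclideanLin_le_sqrt_of_sum_abs_le (by positivity) (by positivity)
          hE.sum_abs_row_le hE.sum_abs_col_le
    _ = α * √(n₁ * n₂) * entrySup E := by
        rw [show α * n₂ * entrySup E * (α * n₁ * entrySup E) = (α * entrySup E) ^ 2 * (n₁ * n₂)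
          by ring, sqrt_mul (sq_nonneg _), sqrt_sq (by positivity)]
        ring
end

section
/- Let E ∈ ℝ^{n₁×n₂} be α-sparse and let V ∈ ℝ^{n₂×r} be μ-incoherent (with respect to n₂). Then for every nonnegative integer p and every row index j, ‖e_jᵀ(EEᵀ)ᵖ E V‖₂ ≤ √(μ²r/n₁)·(α·√(n₁n₂)·‖E‖_∞)^{2p+1}. -/
open Matrix Real

/-! Each row of `E * M` is a combination of at most `α n₂` rows of `M` with coefficients bounded
by `‖E‖_∞`, so by the triangle inequality multiplying by `E` (resp. `Eᵀ`) scales a uniform bound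
on the row norms by `α n₂ ‖E‖_∞` (resp. `α n₁ ‖E‖_∞`). Starting from the incoherence bound
`μ √r / √n₂` on the rows of `V` and multiplying `2p + 1` times gives the claim, because
`(α n₂ ‖E‖_∞) (α n₁ ‖E‖_∞) = (α √(n₁ n₂) ‖E‖_∞)²`. -/

lemma rowNorm_eq_norm_toLp {m n : ℕ} (A : Matrix (Fin m) (Fin n) ℝ) (i : Fin m) :
    rowNorm A i = ‖WithLp.toLp 2 (A i)‖ := by
  simp [rowNorm, EuclideanSpace.norm_eq]

lemma rowNorm_nonneg {m n : ℕ} (A : Matrix (Fin m) (Fin n) ℝ) (i : Fin m) :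
    0 ≤ rowNorm A i :=
  Real.sqrt_nonneg _

lemma rowNorm_mul_le_sum {m n r : ℕ} (A : Matrix (Fin m) (Fin n) ℝ)
    (M : Matrix (Fin n) (Fin r) ℝ) (i : Fin m) :
    rowNorm (A * M) i ≤ ∑ k, |A i k| * rowNorm M k := by
  have hrow : WithLp.toLp 2 ((A * M) i) = ∑ k, A i k • WithLp.toLp 2 (M k) := by
    rw [mul_apply_eq_vecMul, vecMul_eq_sum, WithLp.toLp_sum]
    simp only [WithLp.toLp_smul]
  simp only [rowNorm_eq_norm_toLp, hrow]
  refine (norm_sum_le _ _).trans (Finset.sum_le_sum fun k _ => ?_)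
  rw [norm_smul, Real.norm_eq_abs]

lemma rowNorm_mul_le_of_sparse_row {m n r : ℕ} {A : Matrix (Fin m) (Fin n) ℝ}
    {M : Matrix (Fin n) (Fin r) ℝ} {i : Fin m} {s c B : ℝ}
    (hcard : ((Finset.univ.filter fun k => A i k ≠ 0).card : ℝ) ≤ s)
    (hA : ∀ k, |A i k| ≤ c) (hc : 0 ≤ c) (hM : ∀ k, rowNorm M k ≤ B) (hB : 0 ≤ B) :
    rowNorm (A * M) i ≤ s * c * B := by
  calc rowNorm (A * M) i
      ≤ ∑ k, |A i k| * rowNorm M k := rowNorm_mul_le_sum A M i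
    _ = ∑ k ∈ Finset.univ.filter fun k => A i k ≠ 0, |A i k| * rowNorm M k := by
        refine (Finset.sum_filter_of_ne (p := fun k => A i k ≠ 0) fun k _ hk hAk => hk ?_).symm
        rw [hAk, abs_zero, zero_mul]
    _ ≤ ∑ _k ∈ Finset.univ.filter fun k => A i k ≠ 0, c * B :=
        Finset.sum_le_sum fun k _ => mul_le_mul (hA k) (hM k) (rowNorm_nonneg M k) hc
    _ = (Finset.univ.filter fun k => A i k ≠ 0).card * (c * B) := by
        rw [Finset.sum_const, nsmul_eq_mul]
    _ ≤ s * c * B := by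
        rw [mul_assoc]
        exact mul_le_mul_of_nonneg_right hcard (mul_nonneg hc hB)

lemma abs_le_entrySup_s4 {m n : ℕ} (E : Matrix (Fin m) (Fin n) ℝ) (i : Fin m) (k : Fin n) :
    |E i k| ≤ entrySup E :=
  (le_ciSup (Set.finite_range _).bddAbove k).trans
    (le_ciSup (f := fun i => ⨆ k, |E i k|) (Set.finite_range _).bddAbove i)

lemma entrySup_nonneg_s4 {m n : ℕ} (E : Matrix (Fin m) (Fin n) ℝ) : 0 ≤ entrySup E :=
  Real.iSup_nonneg fun _ => Real.iSup_nonneg fun _ => abs_nonneg _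

lemma IsAlphaSparse.nonneg_s4 {m n : ℕ} {α : ℝ} {E : Matrix (Fin m) (Fin n) ℝ}
    (hE : IsAlphaSparse α E) (i : Fin m) (k : Fin n) : 0 ≤ α := by
  have hm : (0 : ℝ) < m := by exact_mod_cast i.pos
  exact nonneg_of_mul_nonneg_left ((Nat.cast_nonneg _).trans (hE.1 k)) hm

namespace IsAlphaSparse

variable {n₁ n₂ r : ℕ} {α B : ℝ} {E : Matrix (Fin n₁) (Fin n₂) ℝ}

lemma rowNorm_mul_le (hE : IsAlphaSparse α E) {M : Matrix (Fin n₂) (Fin r) ℝ}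
    (hM : ∀ k, rowNorm M k ≤ B) (hB : 0 ≤ B) (i : Fin n₁) :
    rowNorm (E * M) i ≤ α * n₂ * entrySup E * B :=
  rowNorm_mul_le_of_sparse_row (hE.2 i) (abs_le_entrySup_s4 E i) (entrySup_nonneg_s4 E) hM hB

lemma rowNorm_transpose_mul_le (hE : IsAlphaSparse α E) {M : Matrix (Fin n₁) (Fin r) ℝ}
    (hM : ∀ i, rowNorm M i ≤ B) (hB : 0 ≤ B) (k : Fin n₂) :
    rowNorm (Eᵀ * M) k ≤ α * n₁ * entrySup E * B :=
  rowNorm_mul_le_of_sparse_row (hE.1 k) (fun i => abs_le_entrySup_s4 E i k) (entrySup_nonneg_s4 E)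
    hM hB

lemma rowNorm_pow_mul_le (hE : IsAlphaSparse α E) (hα : 0 ≤ α)
    {M : Matrix (Fin n₁) (Fin r) ℝ} (hM : ∀ i, rowNorm M i ≤ B) (hB : 0 ≤ B) (p : ℕ)
    (i : Fin n₁) :
    rowNorm ((E * Eᵀ) ^ p * M) i ≤
      ((α * n₂ * entrySup E) * (α * n₁ * entrySup E)) ^ p * B := by
  have hc := entrySup_nonneg_s4 E
  induction p generalizing i with
  | zero => simpa using hM i
  | succ p ih =>
    have hBp : 0 ≤ ((α * n₂ * entrySup E) * (α * n₁ * entrySup E)) ^ p * B := by positivity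
    have hEtM := hE.rowNorm_transpose_mul_le ih hBp
    calc rowNorm ((E * Eᵀ) ^ (p + 1) * M) i
        = rowNorm (E * (Eᵀ * ((E * Eᵀ) ^ p * M))) i := by
          rw [pow_succ', Matrix.mul_assoc, Matrix.mul_assoc]
      _ ≤ α * n₂ * entrySup E *
            (α * n₁ * entrySup E * (((α * n₂ * entrySup E) * (α * n₁ * entrySup E)) ^ p * B)) :=
          hE.rowNorm_mul_le hEtM (by positivity) i
      _ = ((α * n₂ * entrySup E) * (α * n₁ * entrySup E)) ^ (p + 1) * B := by ring

end IsAlphaSparse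

lemma mul_div_sqrt_le_sqrt_div_mul_sqrt {n₁ n₂ r : ℕ} (hn₁ : 0 < n₁) (hn₂ : 0 < n₂) (μ : ℝ) {a : ℝ}
    (ha : 0 ≤ a) :
    a * n₂ * (μ * √r / √n₂) ≤ √(μ ^ 2 * r / n₁) * (a * √(n₁ * n₂)) := by
  have hs₁ : 0 < √(n₁ : ℝ) := Real.sqrt_pos.2 (by exact_mod_cast hn₁)
  have hs₂ : 0 < √(n₂ : ℝ) := Real.sqrt_pos.2 (by exact_mod_cast hn₂)
  have hLHS : a * n₂ * (μ * √r / √n₂) = a * √n₂ * √r * μ := by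
    field_simp
    linear_combination -a * μ * √r * Real.sq_sqrt (Nat.cast_nonneg (α := ℝ) n₂)
  have hRHS : √(μ ^ 2 * r / n₁) * (a * √(n₁ * n₂)) = a * √n₂ * √r * |μ| := by
    rw [Real.sqrt_div' _ (Nat.cast_nonneg _), Real.sqrt_mul' _ (Nat.cast_nonneg _),
      Real.sqrt_mul (Nat.cast_nonneg _), Real.sqrt_sq_eq_abs]
    field_simp
  rw [hLHS, hRHS]
  exact mul_le_mul_of_nonneg_left (le_abs_self μ) (by positivity)

theorem row_norm_pow_mul_incoherent_bound {n₁ n₂ r : ℕ} (α μ : ℝ)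
    (E : Matrix (Fin n₁) (Fin n₂) ℝ) (V : Matrix (Fin n₂) (Fin r) ℝ)
    (hE : IsAlphaSparse α E) (hV : IsIncoherent μ V) (p : ℕ) (j : Fin n₁) :
    rowNorm ((E * Eᵀ) ^ p * E * V) j ≤
      Real.sqrt (μ ^ 2 * r / n₁) * (α * Real.sqrt (n₁ * n₂) * entrySup E) ^ (2 * p + 1) := by
  rcases Nat.eq_zero_or_pos n₂ with rfl | hn₂
  · simp [rowNorm, Matrix.mul_apply]
  set c := entrySup E
  have hα := hE.nonneg_s4 j ⟨0, hn₂⟩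
  have hc : 0 ≤ c := entrySup_nonneg_s4 E
  have hB : 0 ≤ μ * √r / √n₂ := (rowNorm_nonneg V ⟨0, hn₂⟩).trans (hV _)
  have hEV := hE.rowNorm_mul_le hV hB
  have hsq : (α * n₂ * c) * (α * n₁ * c) = (α * √(n₁ * n₂) * c) ^ 2 := by
    rw [mul_pow, mul_pow, Real.sq_sqrt (by positivity)]
    ring
  have hlin : α * n₂ * c * (μ * √r / √n₂) ≤ √(μ ^ 2 * r / n₁) * (α * √(n₁ * n₂) * c) := by
    linarith [mul_div_sqrt_le_sqrt_div_mul_sqrt (r := r) j.pos hn₂ μ (mul_nonneg hα hc)]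
  calc rowNorm ((E * Eᵀ) ^ p * E * V) j
      ≤ ((α * n₂ * c) * (α * n₁ * c)) ^ p * (α * n₂ * c * (μ * √r / √n₂)) := by
        rw [Matrix.mul_assoc]
        exact hE.rowNorm_pow_mul_le hα hEV (by positivity) p j
    _ ≤ ((α * √(n₁ * n₂) * c) ^ 2) ^ p * (√(μ ^ 2 * r / n₁) * (α * √(n₁ * n₂) * c)) := by
        rw [hsq]
        gcongr
    _ = √(μ ^ 2 * r / n₁) * (α * √(n₁ * n₂) * c) ^ (2 * p + 1) := by ring
end

section
/- Let L, S ∈ ℝ^{m×n} with ‖L‖_∞ ≤ λ, and set Ŝ = Hard_λ(L + S), where Hard_λ is the entrywise hard-thresholding operator. Then: (a) the support of Ŝ is contained in the support of S, i.e., S_{jk} = 0 implies Ŝ_{jk} = 0; and (b) ‖Ŝ − S‖_∞ ≤ 2λ. -/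
open Matrix Real

/-- Entrywise hard-thresholding operator. -/
noncomputable def hardThresh {m n : ℕ} (lam : ℝ) (X : Matrix (Fin m) (Fin n) ℝ) :
    Matrix (Fin m) (Fin n) ℝ :=
  Matrix.of fun i j => if lam < |X i j| then X i j else 0

theorem hardThresh_apply_eq_zero_of_abs_le {m n : ℕ} {lam : ℝ} {X : Matrix (Fin m) (Fin n) ℝ}
    {i : Fin m} {j : Fin n} (h : |X i j| ≤ lam) : hardThresh lam X i j = 0 :=
  if_neg h.not_gt

theorem abs_hardThresh_apply_sub_le {m n : ℕ} {lam : ℝ} {X S : Matrix (Fin m) (Fin n) ℝ}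
    {i : Fin m} {j : Fin n} (h : |X i j - S i j| ≤ lam) :
    |hardThresh lam X i j - S i j| ≤ 2 * lam := by
  have hlam : 0 ≤ lam := (abs_nonneg _).trans h
  by_cases hkeep : lam < |X i j|
  · rw [hardThresh, of_apply, if_pos hkeep]
    linarith
  · rw [hardThresh, of_apply, if_neg hkeep, zero_sub, abs_neg]
    calc |S i j| = |X i j - (X i j - S i j)| := by rw [sub_sub_cancel]
      _ ≤ |X i j| + |X i j - S i j| := abs_sub _ _
      _ ≤ 2 * lam := by linarith

theorem hard_threshold_support_and_error {m n : ℕ} (lam : ℝ)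
    (L S : Matrix (Fin m) (Fin n) ℝ) (hL : ∀ i j, |L i j| ≤ lam) :
    (∀ j k, S j k = 0 → hardThresh lam (L + S) j k = 0) ∧
    (∀ j k, |hardThresh lam (L + S) j k - S j k| ≤ 2 * lam) := by
  refine ⟨fun j k hS => hardThresh_apply_eq_zero_of_abs_le ?_,
    fun j k => abs_hardThresh_apply_sub_le ?_⟩
  · simpa [hS] using hL j k
  · simpa using hL j k
end

section
/- Let A ∈ ℝ^{r×r} be symmetric positive semidefinite-compatible with ‖A‖_F ≤ 3/4 (so that I + A is positive definite). Then ‖I − (I + A)^{-1/2}‖_F ≤ (4/3)·‖A‖_F. -/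
open Matrix Real

/-- Spectral (operator) norm of a matrix, via the Euclidean spaces. -/
noncomputable def spectralNorm' {m n : ℕ} (A : Matrix (Fin m) (Fin n) ℝ) : ℝ :=
  ‖LinearMap.toContinuousLinearMap (Matrix.toEuclideanLin A)‖

/-! In an orthonormal eigenbasis of `S`, both `1 - S⁻¹` and `A = S² - 1` are diagonal, with
entries `1 - λ⁻¹` and `λ² - 1` at the eigenvalues `λ > 0` of `S`, and the Frobenius norm is the
`ℓ²` norm of these entries. A single entry is bounded by the whole norm, so `|λ² - 1| ≤ 3/4`,
i.e. `λ ≥ 1/2`; then `|1 - λ⁻¹| = |λ² - 1| / (λ (λ + 1)) ≤ (4/3) |λ² - 1|` entrywise. -/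

lemma frobNorm_eq_sqrt_trace {m n : ℕ} (M : Matrix (Fin m) (Fin n) ℝ) :
    frobNorm M = √(trace (Mᵀ * M)) := by
  rw [frobNorm, Finset.sum_comm]
  simp [trace, mul_apply, sq]

lemma frobNorm_orthogonal_conj {n : ℕ} {U : Matrix (Fin n) (Fin n) ℝ} (hU : Uᵀ * U = 1)
    (M : Matrix (Fin n) (Fin n) ℝ) : frobNorm (U * M * Uᵀ) = frobNorm M := by
  have hconj : (U * M * Uᵀ)ᵀ * (U * M * Uᵀ) = U * (Mᵀ * M) * Uᵀ := by
    simp only [transpose_mul, transpose_transpose, Matrix.mul_assoc, ← Matrix.mul_assoc Uᵀ U, hU,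
      Matrix.one_mul]
  rw [frobNorm_eq_sqrt_trace, frobNorm_eq_sqrt_trace, hconj, trace_mul_comm, ← Matrix.mul_assoc,
    hU, Matrix.one_mul]

lemma frobNorm_diagonal {n : ℕ} (d : Fin n → ℝ) : frobNorm (diagonal d) = √(∑ i, d i ^ 2) := by
  rw [frobNorm_eq_sqrt_trace]
  simp [sq]

namespace Matrix.IsHermitian

variable {n : ℕ} {S : Matrix (Fin n) (Fin n) ℝ} (hS : S.IsHermitian)
include hS

lemma frobNorm_cfc (f : ℝ → ℝ) : frobNorm (cfc f S) = √(∑ i, f (hS.eigenvalues i) ^ 2) := by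
  have hU : (hS.eigenvectorUnitary : Matrix (Fin n) (Fin n) ℝ)ᵀ * hS.eigenvectorUnitary = 1 := by
    simpa [star_eq_conjTranspose] using Unitary.coe_star_mul_self hS.eigenvectorUnitary
  rw [hS.cfc_eq, IsHermitian.cfc, Unitary.conjStarAlgAut_apply, star_eq_conjTranspose,
    conjTranspose_eq_transpose_of_trivial, frobNorm_orthogonal_conj hU, frobNorm_diagonal]
  rfl

lemma abs_le_frobNorm_cfc (f : ℝ → ℝ) (i : Fin n) :
    |f (hS.eigenvalues i)| ≤ frobNorm (cfc f S) := by
  rw [hS.frobNorm_cfc]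
  exact abs_le_sqrt (Finset.single_le_sum (fun j _ => sq_nonneg (f (hS.eigenvalues j)))
    (Finset.mem_univ i))

lemma frobNorm_cfc_le {f g : ℝ → ℝ} {c : ℝ} (hc : 0 ≤ c)
    (hfg : ∀ i, |f (hS.eigenvalues i)| ≤ c * |g (hS.eigenvalues i)|) :
    frobNorm (cfc f S) ≤ c * frobNorm (cfc g S) := by
  rw [hS.frobNorm_cfc, hS.frobNorm_cfc, ← sqrt_sq hc, ← sqrt_mul (sq_nonneg c), Finset.mul_sum]
  gcongr with i
  rw [← mul_pow]
  exact sq_le_sq.mpr (by rw [abs_mul, abs_of_nonneg hc]; exact hfg i)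

end Matrix.IsHermitian

lemma abs_one_sub_inv_le {x : ℝ} (hx : 1 / 2 ≤ x) : |1 - x⁻¹| ≤ 4 / 3 * |x ^ 2 - 1| := by
  have hx0 : 0 < x := by linarith
  have hfactor : 1 - x⁻¹ = (x ^ 2 - 1) / (x * (x + 1)) := by field_simp; ring
  rw [hfactor, abs_div, abs_of_pos (by positivity : 0 < x * (x + 1)), div_le_iff₀ (by positivity)]
  nlinarith [mul_nonneg (abs_nonneg (x ^ 2 - 1)) (by nlinarith : 0 ≤ 4 / 3 * (x * (x + 1)) - 1)]

theorem inv_sqrt_perturbation_frobenius_general {r : ℕ} (A : Matrix (Fin r) (Fin r) ℝ)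
    (hF : frobNorm A ≤ 3 / 4)
    (S : Matrix (Fin r) (Fin r) ℝ) (hS : S.PosDef) (hSsq : S * S = 1 + A) :
    frobNorm (1 - S⁻¹) ≤ (4 / 3) * frobNorm A := by
  have hSa : IsSelfAdjoint S := hS.1
  have hA : A = cfc (fun x : ℝ => x ^ 2 - 1) S := by
    rw [cfc_sub (fun x : ℝ => x ^ 2) (fun _ => 1) S, cfc_pow_id S 2, cfc_const_one ℝ S, sq, hSsq,
      add_sub_cancel_left]
  have hSinv : 1 - S⁻¹ = cfc (fun x : ℝ => 1 - x⁻¹) S := by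
    rw [cfc_sub (fun _ => 1) (fun x : ℝ => x⁻¹) S (hg := S.finite_real_spectrum.continuousOn _),
      cfc_const_one ℝ S, cfc_ringInverse_id S hS.isUnit, nonsing_inv_eq_ringInverse]
  have hev : ∀ i, 1 / 2 ≤ hS.1.eigenvalues i := by
    intro i
    have hpos := hS.eigenvalues_pos i
    have hle := (hS.1.abs_le_frobNorm_cfc (fun x => x ^ 2 - 1) i).trans (hA ▸ hF)
    nlinarith [abs_le.mp hle]
  rw [hA, hSinv]
  exact hS.1.frobNorm_cfc_le (by norm_num) fun i => abs_one_sub_inv_le (hev i)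

/-- For a symmetric `A` with `‖A‖_F ≤ 3/4` (so that `I + A` is positive definite),
if `S` is the (unique) positive-definite square root of `I + A`, then
`‖I − (I + A)^{-1/2}‖_F = ‖I − S⁻¹‖_F ≤ (4/3)‖A‖_F`. -/
theorem inv_sqrt_perturbation_frobenius {r : ℕ} (A : Matrix (Fin r) (Fin r) ℝ)
    (hsym : Aᵀ = A) (hF : frobNorm A ≤ 3 / 4)
    (S : Matrix (Fin r) (Fin r) ℝ) (hS : S.PosDef) (hSsq : S * S = 1 + A) :
    frobNorm (1 - S⁻¹) ≤ (4 / 3) * frobNorm A :=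
  inv_sqrt_perturbation_frobenius_general A hF S hS hSsq
end
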